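/- Let q_n denote the number of independent dominating sets of the para-chain square cactus Q_n for n ≥ 1, and set q_0 = 1 (the one-vertex graph Q_0 has exactly one maximal independent set). Then, in the ring of formal power series over ℚ, ((1 - X)² - X³) · (∑_{n≥0} q_n Xⁿ) = 1 + X². -/

import Mathlib

/-- `S` is an independent dominating set of `G`: pairwise non-adjacent, and every
vertex outside `S` has a neighbour in `S`. -/
def IsIndepDomSet {V : Type*} (G : SimpleGraph V) (S : Finset V) : Prop :=
  (∀ v ∈ S, ∀ w ∈ S, ¬ G.Adj v w) ∧ ∀ v, v ∉ S → ∃ w ∈ S, G.Adj v w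

/-- The para-chain square cactus `Q n`: `Sum.inl i` is the cut vertex `x i`
(`0 ≤ i ≤ n`), `Sum.inr (Sum.inl k)` is `u (k+1)` and `Sum.inr (Sum.inr k)` is
`w (k+1)` (`0 ≤ k ≤ n-1`); the `i`-th square (`1 ≤ i ≤ n`) is the four-cycle
`x (i-1) – u i – x i – w i – x (i-1)`. -/
def paraSq (n : ℕ) : SimpleGraph (Fin (n + 1) ⊕ (Fin n ⊕ Fin n)) :=
  SimpleGraph.fromRel fun p q =>
    match p, q with
    | Sum.inl i, Sum.inr (Sum.inl k) => (i : ℕ) = (k : ℕ) ∨ (i : ℕ) = (k : ℕ) + 1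
    | Sum.inl i, Sum.inr (Sum.inr k) => (i : ℕ) = (k : ℕ) ∨ (i : ℕ) = (k : ℕ) + 1
    | _, _ => False

/-- The number of independent dominating sets of the para-chain square cactus `Q n`. -/
noncomputable def numIDSParaSq (n : ℕ) : ℕ :=
  Nat.card {S : Finset (Fin (n + 1) ⊕ (Fin n ⊕ Fin n)) // IsIndepDomSet (paraSq n) S}

/-!
In an independent dominating set `S` a vertex lies in `S` exactly when none of its neighbours does.
For the two side vertices of a square this means that they lie in `S` exactly when neither cut
vertex of the square does, so `S` is determined by a state of each cut vertex, and the conditions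
at a square become a rule on consecutive states. If `a`, `b`, `c` count the admissible state
sequences ending in each of the three states, then `a' = a + b`, `b' = b + c`, `c' = a` and
`q n = a n + b n`, hence `q (n + 3) + q (n + 1) = 2 q (n + 2) + q n`, which together with
`q 0, q 1, q 2 = 1, 2, 4` is the generating-function identity.
-/

open Finset

theorem isIndepDomSet_iff {V : Type*} {G : SimpleGraph V} {S : Finset V} :
    IsIndepDomSet G S ↔ ∀ v, v ∈ S ↔ ∀ w ∈ S, ¬ G.Adj v w := by
  refine ⟨fun ⟨hind, hdom⟩ v => ⟨fun hv => hind v hv, fun h => ?_⟩, fun h => ⟨?_, ?_⟩⟩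
  · by_contra hv
    obtain ⟨w, hw, hvw⟩ := hdom v hv
    exact h w hw hvw
  · exact fun v hv => (h v).1 hv
  · intro v hv
    simpa using mt (h v).2 hv

section Chain

variable {σ : Type*} (R : σ → σ → Prop) (I : σ → Prop)

def IsChainFrom {n : ℕ} (s : Fin (n + 1) → σ) : Prop :=
  I (s 0) ∧ ∀ i : Fin n, R (s i.castSucc) (s i.succ)

instance [DecidableRel R] [DecidablePred I] {n : ℕ} : DecidablePred (IsChainFrom R I (n := n)) :=
  fun _ => inferInstanceAs (Decidable (_ ∧ _))

variable {R I}

theorem isChainFrom_snoc {n : ℕ} {t : Fin (n + 1) → σ} {e : σ} :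
    IsChainFrom R I (Fin.snoc t e : Fin (n + 2) → σ) ↔
      IsChainFrom R I t ∧ R (t (Fin.last n)) e := by
  rw [IsChainFrom, IsChainFrom, Fin.forall_fin_succ', ← Fin.castSucc_zero, Fin.succ_last]
  simp only [Fin.snoc_castSucc, Fin.snoc_last, ← Fin.castSucc_succ, and_assoc]

variable (R I) [Fintype σ] [DecidableEq σ] [DecidableRel R] [DecidablePred I]

def chainsEndingAt (n : ℕ) (e : σ) : Finset (Fin (n + 1) → σ) :=
  {s | IsChainFrom R I s ∧ s (Fin.last n) = e}

theorem card_chains_last_mem (n : ℕ) (F : σ → Prop) [DecidablePred F] :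
    #({s | IsChainFrom R I s ∧ F (s (Fin.last n))} : Finset (Fin (n + 1) → σ)) =
      ∑ e with F e, #(chainsEndingAt R I n e) := by
  have hsplit : ({s | IsChainFrom R I s ∧ F (s (Fin.last n))} : Finset (Fin (n + 1) → σ)) =
      ({e | F e} : Finset σ).biUnion (chainsEndingAt R I n) := by
    ext s; simp [chainsEndingAt, and_comm]
  rw [hsplit, card_biUnion]
  intro d _ e _ hde
  exact disjoint_filter.2 fun s _ hd he => hde (hd.2.symm.trans he.2)

theorem card_chainsEndingAt_succ (n : ℕ) (e : σ) :
    #(chainsEndingAt R I (n + 1) e) = ∑ d with R d e, #(chainsEndingAt R I n d) := by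
  have hsnoc : chainsEndingAt R I (n + 1) e =
      ({t | IsChainFrom R I t ∧ R (t (Fin.last n)) e} : Finset _).image (Fin.snoc · e) := by
    ext s
    simp only [chainsEndingAt, mem_filter, mem_univ, true_and, mem_image]
    constructor
    · rintro ⟨hs, rfl⟩
      refine ⟨Fin.init s, ?_, Fin.snoc_init_self s⟩
      rwa [← isChainFrom_snoc, Fin.snoc_init_self]
    · rintro ⟨t, ht, rfl⟩
      exact ⟨isChainFrom_snoc.2 ht, Fin.snoc_last _ _⟩
  rw [hsnoc, card_image_of_injective _ (Fin.snoc_left_injective (α := fun _ => σ) e)]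
  exact card_chains_last_mem R I n (R · e)

end Chain

open PowerSeries in
theorem PowerSeries.mul_mk_eq_of_add_three {R : Type*} [CommRing R] (f : ℕ → R)
    (hf : ∀ n, f (n + 3) + f (n + 1) = 2 * f (n + 2) + f n) :
    ((1 - X) ^ 2 - X ^ 3) * mk f =
      C (f 0) + C (f 1 - 2 * f 0) * X ^ 1 + C (f 2 - 2 * f 1 + f 0) * X ^ 2 := by
  have hexpand : ((1 - X) ^ 2 - X ^ 3) * mk f =
      mk f - (X ^ 1 * mk f + X ^ 1 * mk f) + X ^ 2 * mk f - X ^ 3 * mk f := by ring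
  rw [hexpand]
  ext (_ | _ | _ | m)
  all_goals
    simp only [map_add (coeff _), map_sub (coeff _), coeff_X_pow_mul', coeff_mk, coeff_C_mul_X_pow,
      coeff_C]
    norm_num
  · ring
  · ring
  · rw [show m + 1 + 1 + 1 - 2 = m + 1 by omega, show m + 1 + 1 + 1 - 3 = m by omega,
      if_neg (by omega)]
    linear_combination hf m

namespace paraSq

variable {n : ℕ} {S : Finset (Fin (n + 1) ⊕ (Fin n ⊕ Fin n))} {s : Fin (n + 1) → Fin 3}

def square (a : Fin n ⊕ Fin n) : Fin n := a.elim id id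

@[simp] theorem square_inl (k : Fin n) : square (.inl k : Fin n ⊕ Fin n) = k := rfl

theorem adj_inl_inl (i j : Fin (n + 1)) : ¬ (paraSq n).Adj (.inl i) (.inl j) := by
  simp [paraSq]

theorem adj_inr_inr (a b : Fin n ⊕ Fin n) : ¬ (paraSq n).Adj (.inr a) (.inr b) := by
  rcases a with a | a <;> rcases b with b | b <;> simp [paraSq]

theorem adj_inl_inr (i : Fin (n + 1)) (a : Fin n ⊕ Fin n) :
    (paraSq n).Adj (.inl i) (.inr a) ↔ i = (square a).castSucc ∨ i = (square a).succ := by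
  rcases a with k | k <;> simp [paraSq, square, Fin.ext_iff]

theorem adj_inr_inl (a : Fin n ⊕ Fin n) (i : Fin (n + 1)) :
    (paraSq n).Adj (.inr a) (.inl i) ↔ i = (square a).castSucc ∨ i = (square a).succ := by
  rw [SimpleGraph.adj_comm, adj_inl_inr]

theorem isIndepDomSet_iff :
    IsIndepDomSet (paraSq n) S ↔
      (∀ i, .inl i ∈ S ↔ ∀ a, .inr a ∈ S → i ≠ (square a).castSucc ∧ i ≠ (square a).succ) ∧
      ∀ a, .inr a ∈ S ↔ .inl (square a).castSucc ∉ S ∧ .inl (square a).succ ∉ S := by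
  simp only [_root_.isIndepDomSet_iff, Sum.forall (α := Fin (n + 1)), adj_inl_inl, adj_inr_inr,
    adj_inl_inr, adj_inr_inl, not_false_eq_true, implies_true, true_and, and_true]
  refine and_congr (forall_congr' fun i => ?_) (forall_congr' fun a => ?_)
  · simp only [not_or]
  · refine iff_congr Iff.rfl ⟨fun h => ⟨fun hc => h _ hc (.inl rfl), fun hs => h _ hs (.inr rfl)⟩, ?_⟩
    rintro ⟨hc, hs⟩ x hx (rfl | rfl)
    exacts [hc hx, hs hx]

theorem exists_side_mem_of_inl_not_mem (hS : IsIndepDomSet (paraSq n) S) {i : Fin (n + 1)}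
    (hi : .inl i ∉ S) :
    ∃ k, .inr (.inl k) ∈ S ∧ (i = k.castSucc ∨ i = k.succ) := by
  rw [isIndepDomSet_iff] at hS
  obtain ⟨a, ha, hia⟩ : ∃ a, .inr a ∈ S ∧ (i = (square a).castSucc ∨ i = (square a).succ) := by
    simpa [not_or, or_iff_not_imp_left] using mt (hS.1 i).2 hi
  exact ⟨square a, (hS.2 (.inl (square a))).2 ((hS.2 a).1 ha), hia⟩

/-- States of a cut vertex `x i` relative to an independent dominating set `S`: `0` if `x i ∈ S`,
`1` if the side vertices of the square to the left of `x i` are in `S`, `2` otherwise. -/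
def StateStep (a b : Fin 3) : Prop := (b = 1 ↔ a ≠ 0 ∧ b ≠ 0) ∧ (a = 2 → b = 1)

instance : DecidableRel StateStep := fun _ _ => inferInstanceAs (Decidable (_ ∧ _))

-- `x 0` has no square to its left, and `x n` no square to its right that could dominate it.
def IsStateSeq (s : Fin (n + 1) → Fin 3) : Prop :=
  IsChainFrom StateStep (· ≠ 1) s ∧ s (Fin.last n) ≠ 2

instance : DecidablePred (IsStateSeq (n := n)) := fun _ => inferInstanceAs (Decidable (_ ∧ _))

theorem IsStateSeq.eq_zero_iff (hs : IsStateSeq s) (i : Fin (n + 1)) :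
    s i = 0 ↔ ∀ k : Fin n, s k.succ = 1 → i ≠ k.castSucc ∧ i ≠ k.succ := by
  refine ⟨fun h0 k hk => ⟨?_, ?_⟩, fun h => ?_⟩
  · rintro rfl
    exact ((hs.1.2 k).1.1 hk).1 h0
  · rintro rfl
    simp [h0] at hk
  · by_contra h0
    obtain h1 | h2 : s i = 1 ∨ s i = 2 := by omega
    · obtain ⟨k, rfl⟩ := Fin.exists_succ_eq_of_ne_zero fun h => hs.1.1 (h ▸ h1)
      exact (h k h1).2 rfl
    · obtain ⟨k, rfl⟩ := Fin.eq_castSucc_of_ne_last fun h => hs.2 (h ▸ h2)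
      exact (h k ((hs.1.2 k).2 h2)).1 rfl

def ofStates (s : Fin (n + 1) → Fin 3) : Finset (Fin (n + 1) ⊕ (Fin n ⊕ Fin n)) :=
  ({i | s i = 0} : Finset _).disjSum {a | s (square a).succ = 1}

@[simp] theorem inl_mem_ofStates {i : Fin (n + 1)} :
    .inl i ∈ ofStates s ↔ s i = 0 := by
  simp [ofStates]

@[simp] theorem inr_mem_ofStates {a : Fin n ⊕ Fin n} :
    .inr a ∈ ofStates s ↔ s (square a).succ = 1 := by
  simp [ofStates]

def toStates (S : Finset (Fin (n + 1) ⊕ (Fin n ⊕ Fin n))) (i : Fin (n + 1)) : Fin 3 :=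
  if .inl i ∈ S then 0 else if ∃ k : Fin n, i = k.succ ∧ .inr (.inl k) ∈ S then 1 else 2

theorem toStates_eq_two {i : Fin (n + 1)} :
    toStates S i = 2 ↔ .inl i ∉ S ∧ ¬∃ k : Fin n, i = k.succ ∧ .inr (.inl k) ∈ S := by
  unfold toStates
  split_ifs <;> simp_all

theorem isIndepDomSet_ofStates (hs : IsStateSeq s) :
    IsIndepDomSet (paraSq n) (ofStates s) := by
  simp only [isIndepDomSet_iff, inl_mem_ofStates, inr_mem_ofStates]
  refine ⟨fun i => ?_, fun a => (hs.1.2 (square a)).1⟩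
  simpa [Sum.forall, square] using hs.eq_zero_iff i

theorem isStateSeq_toStates (hS : IsIndepDomSet (paraSq n) S) : IsStateSeq (toStates S) := by
  have hright : ∀ i, .inl i ∉ S → (¬∃ k : Fin n, i = k.succ ∧ .inr (.inl k) ∈ S) →
      ∃ k : Fin n, i = k.castSucc ∧ .inr (.inl k) ∈ S := by
    intro i hi hleft
    obtain ⟨k, hk, rfl | rfl⟩ := exists_side_mem_of_inl_not_mem hS hi
    exacts [⟨k, rfl, hk⟩, absurd ⟨k, rfl, hk⟩ hleft]
  have hside : ∀ k : Fin n, .inr (.inl k) ∈ S ↔ .inl k.castSucc ∉ S ∧ .inl k.succ ∉ S :=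
    fun k => (isIndepDomSet_iff.1 hS).2 (.inl k)
  refine ⟨⟨?_, fun k => ⟨?_, ?_⟩⟩, ?_⟩
  · have hleft : ¬∃ k : Fin n, (0 : Fin (n + 1)) = k.succ ∧ .inr (.inl k) ∈ S :=
      fun ⟨k, hk, _⟩ => Fin.succ_ne_zero k hk.symm
    simp only [toStates, hleft, if_false]
    split_ifs <;> decide
  · have := hside k
    simp only [toStates, Fin.succ_inj, exists_eq_left'] at this ⊢
    split_ifs <;> simp_all
  · intro h2
    obtain ⟨j, hj, hu⟩ := hright _ (toStates_eq_two.1 h2).1 (toStates_eq_two.1 h2).2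
    obtain rfl := Fin.castSucc_injective _ hj
    simp [toStates, hu, ((hside k).1 hu).2]
  · intro h2
    obtain ⟨j, hj, -⟩ := hright _ (toStates_eq_two.1 h2).1 (toStates_eq_two.1 h2).2
    exact (Fin.castSucc_lt_last j).ne hj.symm

theorem ofStates_toStates (hS : IsIndepDomSet (paraSq n) S) : ofStates (toStates S) = S := by
  have hside := (isIndepDomSet_iff.1 hS).2
  ext (i | a)
  · simp only [inl_mem_ofStates, toStates]
    split_ifs <;> simp_all
  · have hu := hside (.inl (square a))
    simp only [inr_mem_ofStates, toStates, Fin.succ_inj,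
      exists_eq_left', square_inl, hside a] at hu ⊢
    split_ifs <;> simp_all

theorem toStates_ofStates (h0 : s 0 ≠ 1) :
    toStates (ofStates s) = s := by
  funext i
  cases i using Fin.cases with
  | zero =>
    have hleft : ¬∃ k : Fin n, (0 : Fin (n + 1)) = k.succ ∧ s k.succ = 1 :=
      fun ⟨k, hk, _⟩ => Fin.succ_ne_zero k hk.symm
    simp only [toStates, inl_mem_ofStates, inr_mem_ofStates, square_inl, hleft, if_false]
    split_ifs <;> omega
  | succ k =>
    simp only [toStates, inl_mem_ofStates, inr_mem_ofStates, square_inl, Fin.succ_inj,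
      exists_eq_left']
    split_ifs <;> omega

def idsEquivStateSeq (n : ℕ) :
    {S // IsIndepDomSet (paraSq n) S} ≃ {s : Fin (n + 1) → Fin 3 // IsStateSeq s} where
  toFun S := ⟨toStates S.1, isStateSeq_toStates S.2⟩
  invFun s := ⟨ofStates s.1, isIndepDomSet_ofStates s.2⟩
  left_inv S := Subtype.ext (ofStates_toStates S.2)
  right_inv s := Subtype.ext (toStates_ofStates s.2.1.1)

end paraSq

open paraSq

theorem numIDSParaSq_eq_card (n : ℕ) :
    numIDSParaSq n =
      #(chainsEndingAt StateStep (· ≠ 1) n 0) + #(chainsEndingAt StateStep (· ≠ 1) n 1) := by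
  rw [numIDSParaSq, Nat.card_congr (idsEquivStateSeq n), Nat.card_eq_fintype_card,
    Fintype.card_subtype]
  refine (card_chains_last_mem StateStep (· ≠ 1) n (· ≠ 2)).trans ?_
  rw [show ({e | e ≠ 2} : Finset (Fin 3)) = {0, 1} by decide, sum_pair (by decide)]

theorem card_chainsEndingAt_stateStep_zero (e : Fin 3) :
    #(chainsEndingAt StateStep (· ≠ 1) 0 e) = if e = 1 then 0 else 1 := by
  revert e; decide

theorem card_chainsEndingAt_stateStep_succ (n : ℕ) :
    #(chainsEndingAt StateStep (· ≠ 1) (n + 1) 0) =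
        #(chainsEndingAt StateStep (· ≠ 1) n 0) + #(chainsEndingAt StateStep (· ≠ 1) n 1) ∧
      #(chainsEndingAt StateStep (· ≠ 1) (n + 1) 1) =
        #(chainsEndingAt StateStep (· ≠ 1) n 1) + #(chainsEndingAt StateStep (· ≠ 1) n 2) ∧
      #(chainsEndingAt StateStep (· ≠ 1) (n + 1) 2) = #(chainsEndingAt StateStep (· ≠ 1) n 0) := by
  simp only [card_chainsEndingAt_succ,
    show ({d | StateStep d 0} : Finset (Fin 3)) = {0, 1} by decide,
    show ({d | StateStep d 1} : Finset (Fin 3)) = {1, 2} by decide,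
    show ({d | StateStep d 2} : Finset (Fin 3)) = {0} by decide,
    sum_pair (show (0 : Fin 3) ≠ 1 by decide), sum_pair (show (1 : Fin 3) ≠ 2 by decide),
    sum_singleton, and_self]

theorem numIDSParaSq_add_three (n : ℕ) :
    numIDSParaSq (n + 3) + numIDSParaSq (n + 1) = 2 * numIDSParaSq (n + 2) + numIDSParaSq n := by
  simp only [numIDSParaSq_eq_card, card_chainsEndingAt_stateStep_succ]
  ring

theorem numIDSParaSq_zero_one_two :
    numIDSParaSq 0 = 1 ∧ numIDSParaSq 1 = 2 ∧ numIDSParaSq 2 = 4 := by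
  simp [numIDSParaSq_eq_card, card_chainsEndingAt_stateStep_succ,
    card_chainsEndingAt_stateStep_zero]

/-- In `ℚ⟦X⟧`, `((1 - X)² - X³) · ∑_{n≥0} q_n Xⁿ = 1 + X²`, where `q n` is the
number of independent dominating sets of `Q n` (and `q 0 = 1`, `Q 0` being the
one-vertex graph). -/
theorem numIDSParaSq_generating_function :
    ((1 - PowerSeries.X) ^ 2 - PowerSeries.X ^ 3) *
        PowerSeries.mk (fun n : ℕ => (numIDSParaSq n : ℚ)) =
      1 + PowerSeries.X ^ 2 := by
  obtain ⟨h0, h1, h2⟩ := numIDSParaSq_zero_one_two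
  rw [PowerSeries.mul_mk_eq_of_add_three _ fun n => mod_cast numIDSParaSq_add_three n]
  norm_num [h0, h1, h2, ← map_mul]
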